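/- arXiv:2201.13412 — 4 statements merged into one kernel-verified Lean document; each statement's English description precedes it below -/
import Mathlib

section
/- Let ξ be a D-doubling gauge function on balls of a metric space X, let E ⊆ B(p,R) and L ≥ 1. Then min( H^ξ_{R/L}(E), D^{-⌊log₂ L⌋ - 8}·ξ(B(p,R)) ) ≤ H^ξ_R(E), where H^ξ_r denotes the spherical Hausdorff ξ-content at scale r. -/
/-!
Take a cover of `E` by balls of radii `≤ R`. If every ball meeting `E` has radius `≤ R / L`,
discarding the other balls leaves a cover admissible at scale `R / L`. Otherwise some ball
`B(x, r)` with `R / L < r ≤ R` meets `E ⊆ B(p, R)`. Then `B(x, 2R) ⊆ B(p, 4R)`, and since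
`2R ≤ 2 ^ (⌊log₂ L⌋ + 2) r`, a chain of `⌊log₂ L⌋ + 5` doubling steps gives
`ξ(p, R) ≤ D ^ (⌊log₂ L⌋ + 5) ξ(x, r)`: this single ball already costs as much as the second
term of the minimum.
-/


open Metric Set MeasureTheory Filter ENNReal Topology

noncomputable section

variable {X : Type*} [MetricSpace X]

/-- A gauge function assigns a positive real to each ball (center, radius). -/
def IsGauge (ξ : X → ℝ → ℝ) : Prop := ∀ x r, 0 < r → 0 < ξ x r

/-- `ξ` is `D`-doubling: for balls `B(x,r) ⊆ B(y,r')` with `r ≤ r' ≤ 2r`,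
`D⁻¹ ξ(B) ≤ ξ(B') ≤ D ξ(B)`. -/
def IsDoublingGauge (D : ℝ) (ξ : X → ℝ → ℝ) : Prop :=
  ∀ x r y r', 0 < r → ball x r ⊆ ball y r' → r ≤ r' → r' ≤ 2 * r →
    D⁻¹ * ξ x r ≤ ξ y r' ∧ ξ y r' ≤ D * ξ x r

/-- `ν ≪ ξ` : for balls `B ⊆ B'` with `rad B ≤ rad B'`, `ξ(B')/ν(B') ≤ ξ(B)/ν(B)`. -/
def Dominates (ν ξ : X → ℝ → ℝ) : Prop :=
  ∀ x r y r', 0 < r → ball x r ⊆ ball y r' → r ≤ r' →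
    ξ y r' / ν y r' ≤ ξ x r / ν x r

open scoped Classical in
/-- Spherical Hausdorff `ξ`-content at scale `s`. -/
noncomputable def content (ξ : X → ℝ → ℝ) (s : ℝ) (A : Set X) : ℝ≥0∞ :=
  ⨅ (c : ℕ → X) (ρ : ℕ → ℝ) (_ : ∀ n, ρ n ≤ s) (_ : A ⊆ ⋃ n, ball (c n) (ρ n)),
    ∑' n, if 0 < ρ n then ENNReal.ofReal (ξ (c n) (ρ n)) else 0

open scoped Classical in
/-- Spherical Hausdorff `ξ`-content with no scale restriction. -/
noncomputable def contentInf (ξ : X → ℝ → ℝ) (A : Set X) : ℝ≥0∞ :=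
  ⨅ (c : ℕ → X) (ρ : ℕ → ℝ) (_ : A ⊆ ⋃ n, ball (c n) (ρ n)),
    ∑' n, if 0 < ρ n then ENNReal.ofReal (ξ (c n) (ρ n)) else 0

/-- The limsup set of a collection of closed balls: points lying in balls of the
collection of arbitrarily small positive radius. -/
def limsupSet (B : Set (X × ℝ)) : Set X :=
  {x | ∀ ε > 0, ∃ p ∈ B, 0 < p.2 ∧ p.2 < ε ∧ x ∈ closedBall p.1 p.2}

/-- Inflation of a collection of balls by a factor `t`. -/
def inflate (t : ℝ) (B : Set (X × ℝ)) : Set (X × ℝ) := (fun p => (p.1, t * p.2)) '' B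

/-- The closed balls of the collection are pairwise disjoint. -/
def PairwiseDisjointCB (B : Set (X × ℝ)) : Prop :=
  ∀ p ∈ B, ∀ q ∈ B, p ≠ q → Disjoint (closedBall p.1 p.2) (closedBall q.1 q.2)

namespace IsDoublingGauge

variable {D : ℝ} {ξ : X → ℝ → ℝ}

theorem le_mul_of_le_two_mul (hdb : IsDoublingGauge D ξ) (hD : 0 < D) (x : X) {s t : ℝ}
    (hs : 0 < s) (hst : s ≤ t) (hts : t ≤ 2 * s) :
    ξ x t ≤ D * ξ x s ∧ ξ x s ≤ D * ξ x t :=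
  have h := hdb x s x t hs (ball_subset_ball hst) hst hts
  ⟨h.2, (inv_mul_le_iff₀ hD).1 h.1⟩

theorem le_pow_mul_of_le_two_pow_mul (hdb : IsDoublingGauge D ξ) (hD : 0 < D) (x : X)
    {s t : ℝ} (hs : 0 < s) (hst : s ≤ t) {k : ℕ} (hts : t ≤ 2 ^ k * s) :
    ξ x t ≤ D ^ k * ξ x s ∧ ξ x s ≤ D ^ k * ξ x t := by
  induction k generalizing t with
  | zero =>
    obtain rfl : t = s := le_antisymm (by simpa using hts) hst
    simp
  | succ k ih =>
    set u := max s (t / 2)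
    have hsu : s ≤ u := le_max_left _ _
    have hu : u ≤ 2 ^ k * s :=
      max_le (le_mul_of_one_le_left hs.le (one_le_pow₀ one_le_two))
        (by rw [pow_succ] at hts; linarith)
    have hut : u ≤ t := max_le hst (by linarith)
    have htu : t ≤ 2 * u := by linarith [le_max_right s (t / 2)]
    obtain ⟨ih₁, ih₂⟩ := ih hsu hu
    obtain ⟨h₁, h₂⟩ := hdb.le_mul_of_le_two_mul hD x (hs.trans_le hsu) hut htu
    constructor
    · calc ξ x t ≤ D * (D ^ k * ξ x s) := h₁.trans (mul_le_mul_of_nonneg_left ih₁ hD.le)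
        _ = D ^ (k + 1) * ξ x s := by ring
    · calc ξ x s ≤ D ^ k * (D * ξ x t) := ih₂.trans (mul_le_mul_of_nonneg_left h₂ (by positivity))
        _ = D ^ (k + 1) * ξ x t := by ring

theorem le_pow_mul_of_dist_lt (hdb : IsDoublingGauge D ξ) (hD : 0 < D) {x p : X} {r R : ℝ}
    (hr : 0 < r) (hrR : r ≤ R) (hxp : dist x p < r + R) {k : ℕ} (hk : 2 * R ≤ 2 ^ k * r) :
    ξ p R ≤ D ^ (k + 3) * ξ x r := by
  have hR : 0 < R := hr.trans_le hrR
  have h₁ : ξ p R ≤ D ^ 2 * ξ p (4 * R) :=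
    (hdb.le_pow_mul_of_le_two_pow_mul hD p hR (by linarith) (by norm_num)).2
  have hsub : ball x (2 * R) ⊆ ball p (4 * R) := fun z hz => by
    rw [mem_ball] at hz ⊢
    linarith [dist_triangle z x p]
  have h₂ : ξ p (4 * R) ≤ D * ξ x (2 * R) :=
    (hdb x (2 * R) p (4 * R) (by linarith) hsub (by linarith) (by linarith)).2
  have h₃ : ξ x (2 * R) ≤ D ^ k * ξ x r :=
    (hdb.le_pow_mul_of_le_two_pow_mul hD x hr (by linarith) hk).1
  calc ξ p R ≤ D ^ 2 * (D * (D ^ k * ξ x r)) :=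
        h₁.trans (mul_le_mul_of_nonneg_left
          (h₂.trans (mul_le_mul_of_nonneg_left h₃ hD.le)) (sq_nonneg D))
    _ = D ^ (k + 3) * ξ x r := by ring

end IsDoublingGauge

theorem lt_two_pow_natFloor_logb_add_one {L : ℝ} (hL : 0 < L) :
    L < 2 ^ (⌊Real.logb 2 L⌋₊ + 1) := by
  have h := Nat.lt_floor_add_one (Real.logb 2 L)
  rw [Real.logb_lt_iff_lt_rpow one_lt_two hL] at h
  exact_mod_cast h

theorem content_le_tsum_of_cover {ξ : X → ℝ → ℝ} {s : ℝ} {E : Set X} (hs : 0 ≤ s)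
    (c : ℕ → X) (ρ : ℕ → ℝ) (hcov : E ⊆ ⋃ n, ball (c n) (ρ n))
    (hρ : ∀ n, (E ∩ ball (c n) (ρ n)).Nonempty → ρ n ≤ s) :
    content ξ s E ≤ ∑' n, if 0 < ρ n then ENNReal.ofReal (ξ (c n) (ρ n)) else 0 := by
  classical
  -- a ball of radius `0` is empty and contributes nothing to the sum
  set ρ' : ℕ → ℝ := fun n => if (E ∩ ball (c n) (ρ n)).Nonempty then ρ n else 0
  have hρ' : ∀ n, ρ' n ≤ s := fun n => by
    by_cases hn : (E ∩ ball (c n) (ρ n)).Nonempty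
    · simpa only [ρ', if_pos hn] using hρ n hn
    · simpa only [ρ', if_neg hn] using hs
  have hcov' : E ⊆ ⋃ n, ball (c n) (ρ' n) := fun y hy => by
    obtain ⟨n, hn⟩ := mem_iUnion.1 (hcov hy)
    exact mem_iUnion.2 ⟨n, by rwa [show ρ' n = ρ n from if_pos ⟨y, hy, hn⟩]⟩
  refine (iInf₂_le_of_le c ρ' (iInf₂_le_of_le hρ' hcov' le_rfl)).trans
    (ENNReal.tsum_le_tsum fun n => ?_)
  by_cases hn : (E ∩ ball (c n) (ρ n)).Nonempty <;> simp [ρ', hn]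

theorem min_content_le_content {ξ : X → ℝ → ℝ} {s t a : ℝ} {E : Set X} (ht : 0 ≤ t)
    (ha : ∀ x r, t < r → r ≤ s → (E ∩ ball x r).Nonempty → a ≤ ξ x r) :
    min (content ξ t E) (ENNReal.ofReal a) ≤ content ξ s E := by
  refine le_iInf fun c => le_iInf fun ρ => le_iInf fun hρ => le_iInf fun hcov => ?_
  by_cases hbig : ∃ n, t < ρ n ∧ (E ∩ ball (c n) (ρ n)).Nonempty
  · obtain ⟨n, hn, hmeet⟩ := hbig
    calc min _ _ ≤ ENNReal.ofReal a := min_le_right _ _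
      _ ≤ ENNReal.ofReal (ξ (c n) (ρ n)) := ENNReal.ofReal_le_ofReal (ha _ _ hn (hρ n) hmeet)
      _ = if 0 < ρ n then ENNReal.ofReal (ξ (c n) (ρ n)) else 0 := (if_pos (ht.trans_lt hn)).symm
      _ ≤ _ := ENNReal.le_tsum n
  · push Not at hbig
    exact (min_le_left _ _).trans <| content_le_tsum_of_cover ht c ρ hcov fun n hn =>
      not_lt.1 fun h => hn.ne_empty (hbig n h)

/-- Scale change lemma for Hausdorff contents. -/
theorem stmt1 (D : ℝ) (hD : 1 ≤ D) (ξ : X → ℝ → ℝ) (hg : IsGauge ξ)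
    (hdb : IsDoublingGauge D ξ) (p : X) (R L : ℝ) (hR : 0 < R) (hL : 1 ≤ L)
    (E : Set X) (hE : E ⊆ ball p R) :
    min (content ξ (R / L) E) (ENNReal.ofReal (D ^ (-⌊Real.logb 2 L⌋ - 8) * ξ p R)) ≤
      content ξ R E := by
  have hL0 : 0 < L := one_pos.trans_le hL
  set M := ⌊Real.logb 2 L⌋₊
  have hM : ⌊Real.logb 2 L⌋ = M :=
    (Int.natCast_floor_eq_floor (Real.logb_nonneg one_lt_two hL)).symm
  refine min_content_le_content (div_pos hR hL0).le fun x r hrL hrR ⟨y, hyE, hyx⟩ => ?_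
  have hr : 0 < r := (div_pos hR hL0).trans hrL
  have hxp : dist x p < r + R := by
    linarith [dist_triangle x y p, dist_comm x y, mem_ball.1 hyx, mem_ball.1 (hE hyE)]
  have hk : 2 * R ≤ 2 ^ (M + 2) * r := by
    have hRL : R < L * r := by rwa [div_lt_iff₀ hL0, mul_comm] at hrL
    have hLM := lt_two_pow_natFloor_logb_add_one hL0
    calc 2 * R ≤ 2 * (2 ^ (M + 1) * r) := by gcongr; nlinarith
      _ = 2 ^ (M + 2) * r := by ring
  have hξ := hdb.le_pow_mul_of_dist_lt (one_pos.trans_le hD) hr hrR hxp hk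
  rw [hM, show -(M : ℤ) - 8 = -((M + 8 : ℕ) : ℤ) by push_cast; ring, zpow_neg, zpow_natCast,
    inv_mul_le_iff₀ (pow_pos (one_pos.trans_le hD) _)]
  exact hξ.trans (mul_le_mul_of_nonneg_right (pow_le_pow_right₀ hD (by omega)) (hg x r hr).le)
end
end

section
/- Completeness cannot be dropped in the nested-ball limsup theorem: for X = [0,1] \ {1/2} with the gauge ξ ≡ 1, the collection B = { closed balls centered at 1/2 − 1/(2n) of radius 1/n : n ∈ ℕ } satisfies H^ξ_{rad(B̄)}(⋃ B|^{B̄}_r) ≥ 1 for every B̄ ∈ B and r ≤ rad(B̄), yet limsup 2B = ∅. -/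
open Metric Set MeasureTheory Filter ENNReal Topology

noncomputable section

variable {X : Type*} [MetricSpace X]

/-!
Every ball of the collection contains balls of the collection of arbitrarily small radius
(the balls `B̄(1/2 - s/2, s)` decrease as `s` decreases), so each union in question is
nonempty, and with the gauge `ξ ≡ 1` any cover of a nonempty set costs at least `1`.
On the other hand the centres of the doubled balls tend to the missing point `1/2` at a rate
comparable to the radii, so a point of `limsup 2B` would have to be `1/2`.
-/

lemma one_le_content_one_of_nonempty {s : ℝ} {A : Set X}
    (hA : A.Nonempty) : 1 ≤ content (fun _ _ => (1 : ℝ)) s A := by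
  classical
  refine le_iInf fun c => le_iInf fun ρ => le_iInf fun _ => le_iInf fun hcover => ?_
  obtain ⟨x, hx⟩ := hA
  obtain ⟨k, hk⟩ := mem_iUnion.1 (hcover hx)
  have hρ : 0 < ρ k := dist_nonneg.trans_lt (mem_ball.1 hk)
  calc (1 : ENNReal) = if 0 < ρ k then ENNReal.ofReal 1 else 0 := by simp [hρ]
    _ ≤ _ := ENNReal.le_tsum (f := fun n => if 0 < ρ n then ENNReal.ofReal 1 else 0) k

lemma closedBall_sub_half_subset {a s t : ℝ} (hst : s ≤ t) :
    closedBall (a - s / 2) s ⊆ closedBall (a - t / 2) t := by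
  rw [Real.closedBall_eq_Icc, Real.closedBall_eq_Icc]
  exact Icc_subset_Icc (by linarith) (by linarith)

lemma Subtype.closedBall_subset_closedBall {P : X → Prop} {x y : Subtype P} {r s : ℝ}
    (h : closedBall (x : X) r ⊆ closedBall (y : X) s) : closedBall x r ⊆ closedBall y s := by
  rw [← Subtype.preimage_closedBall, ← Subtype.preimage_closedBall]
  exact preimage_mono h

lemma coe_eq_of_mem_limsupSet {P : X → Prop} {B : Set (Subtype P × ℝ)}
    {a : X} {K : ℝ} (hK : 0 ≤ K) (hB : ∀ p ∈ B, dist (p.1 : X) a ≤ K * p.2) {x : Subtype P}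
    (hx : x ∈ limsupSet B) : (x : X) = a := by
  refine eq_of_forall_dist_le fun ε hε => ?_
  obtain ⟨p, hpB, -, hpε, hxp⟩ := hx (ε / (1 + K)) (by positivity)
  have hxp' : dist (x : X) p.1 ≤ p.2 := hxp
  calc dist (x : X) a ≤ dist (x : X) p.1 + dist (p.1 : X) a := dist_triangle _ _ _
    _ ≤ (1 + K) * p.2 := by linarith [hB p hpB]
    _ ≤ (1 + K) * (ε / (1 + K)) := by gcongr
    _ = ε := by field_simp

lemma limsupSet_eq_empty_of_dist_le {P : X → Prop}
    {B : Set (Subtype P × ℝ)} {a : X} (ha : ¬P a) {K : ℝ} (hK : 0 ≤ K)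
    (hB : ∀ p ∈ B, dist (p.1 : X) a ≤ K * p.2) : limsupSet B = ∅ :=
  eq_empty_of_forall_notMem fun x hx => ha (coe_eq_of_mem_limsupSet hK hB hx ▸ x.2)

lemma exists_nat_ge_one_div_le {r : ℝ} (hr : 0 < r) (n : ℕ) :
    ∃ m : ℕ, n ≤ m ∧ 1 / (m : ℝ) ≤ r := by
  obtain ⟨k, hk⟩ := exists_nat_one_div_lt hr
  refine ⟨max n (k + 1), le_max_left _ _, le_of_lt (lt_of_le_of_lt ?_ hk)⟩
  gcongr
  exact_mod_cast le_max_right n (k + 1)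

lemma one_half_sub_mem {t : ℝ} (ht : 1 ≤ t) :
    1 / 2 - 1 / (2 * t) ∈ Icc (0 : ℝ) 1 ∧ 1 / 2 - 1 / (2 * t) ≠ 1 / 2 := by
  have hpos : 0 < 1 / (2 * t) := by positivity
  have hle : 1 / (2 * t) ≤ 1 / 2 := by gcongr; linarith
  exact ⟨⟨by linarith, by linarith⟩, by linarith⟩

/-- Completeness cannot be dropped: in `[0,1] \ {1/2}` with the constant gauge,
the collection of balls `B̄(1/2 - 1/(2n), 1/n)` satisfies the scale-invariant
content bound, yet `limsup 2B = ∅`. -/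
theorem stmt4 :
    ∀ B : Set ({x : ℝ // x ∈ Set.Icc (0:ℝ) 1 ∧ x ≠ 1/2} × ℝ),
      B = {p | ∃ n : ℕ, 1 ≤ n ∧ (p.1 : ℝ) = 1/2 - 1/(2*(n:ℝ)) ∧ p.2 = 1/(n:ℝ)} →
      (∀ p ∈ B, ∀ r, 0 < r → r ≤ p.2 →
        1 ≤ content (fun _ _ => (1:ℝ)) p.2
          (⋃ q ∈ {q ∈ B | closedBall q.1 q.2 ⊆ closedBall p.1 p.2 ∧ q.2 ≤ r},
            closedBall q.1 q.2)) ∧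
      limsupSet (inflate 2 B) = ∅ := by
  rintro B rfl
  have half_div (t : ℝ) : 1 / (2 * t) = 1 / t / 2 := by ring
  refine ⟨?_, ?_⟩
  · rintro ⟨c, ρ⟩ ⟨n, hn, hc, hρ : ρ = 1 / n⟩ r hr -
    subst hρ
    apply one_le_content_one_of_nonempty
    obtain ⟨m, hnm, hmr⟩ := exists_nat_ge_one_div_le hr n
    have hm : (1 : ℝ) ≤ m := by exact_mod_cast hn.trans hnm
    obtain ⟨q, hq⟩ : ∃ q : {x : ℝ // x ∈ Icc (0:ℝ) 1 ∧ x ≠ 1/2}, (q : ℝ) = 1/2 - 1/(2*(m:ℝ)) :=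
      ⟨⟨_, one_half_sub_mem hm⟩, rfl⟩
    have hnested : closedBall q (1 / (m : ℝ)) ⊆ closedBall c (1 / (n : ℝ)) := by
      refine Subtype.closedBall_subset_closedBall ?_
      rw [hc, hq, half_div, half_div]
      exact closedBall_sub_half_subset (by gcongr)
    have hq_mem : q ∈ closedBall q (1 / (m : ℝ)) := mem_closedBall_self (by positivity)
    exact ⟨q, mem_biUnion (x := (q, 1 / (m : ℝ)))
      ⟨⟨m, hn.trans hnm, hq, rfl⟩, hnested, hmr⟩ hq_mem⟩
  · refine limsupSet_eq_empty_of_dist_le (a := (1 / 2 : ℝ)) (fun h => h.2 rfl)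
      (K := 1 / 4) (by norm_num) ?_
    rintro _ ⟨p, ⟨n, -, hc, hr⟩, rfl⟩
    refine le_of_eq ?_
    calc dist (p.1 : ℝ) (1 / 2) = |1 / (2 * (n : ℝ))| := by rw [hc, dist_self_sub_left]; rfl
      _ = 1 / 4 * (2 * p.2) := by rw [hr, abs_of_nonneg (by positivity)]; ring
end
end

section
/- Let (X,d,μ) be a D-measure-doubling metric measure space, E ⊆ X measurable, γ : [0,1] → X a continuous curve and r > 0. If μ(B̄(γ(0),r) ∩ E)/μ(B̄(γ(0),r)) ≥ 1/2 and μ(B̄(γ(1),r) ∩ E)/μ(B̄(γ(1),r)) ≤ 1/2, then there exists t ∈ [0,1] and a closed ball B̄ of radius at most 2r containing γ(t) with Θ(E,B̄) ≥ (1/2)D^{-2}. -/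
open Metric Set MeasureTheory Filter ENNReal Topology

noncomputable section

variable {X : Type*} [MetricSpace X]

/-- `μ` is a `D`-doubling measure, positive and finite on balls. -/
def IsDoublingMeasure [MeasurableSpace X] (D : ℝ≥0∞) (μ : Measure X) : Prop :=
  ∀ (x : X) (r : ℝ), 0 < r →
    μ (closedBall x (2 * r)) ≤ D * μ (closedBall x r) ∧
    0 < μ (closedBall x r) ∧ μ (closedBall x r) < ⊤

/-- `Θ(E, B̄(x,r)) = min(μ(E ∩ B̄), μ(B̄ \ E)) / μ(B̄)`. -/
def theta [MeasurableSpace X] (μ : Measure X) (E : Set X) (x : X) (r : ℝ) : ℝ≥0∞ :=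
  min (μ (E ∩ closedBall x r)) (μ (closedBall x r \ E)) / μ (closedBall x r)

/-- The collection `B(E,δ)` of closed balls that are `δ`-half-full and `δ`-half-empty. -/
def halfFull [MeasurableSpace X] (μ : Measure X) (E : Set X) (δ : ℝ≥0∞) : Set (X × ℝ) :=
  {p | 0 < p.2 ∧ δ ≤ theta μ E p.1 p.2}

/-- The quantitative measure-theoretic boundary `∂*_η E`. -/
def qBoundary [MeasurableSpace X] (μ : Measure X) (E : Set X) (η : ℝ≥0∞) : Set X :=
  {x | η < Filter.limsup (fun r => μ (E ∩ closedBall x r) / μ (closedBall x r)) (𝓝[>] (0:ℝ)) ∧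
       η < Filter.limsup (fun r => μ (closedBall x r \ E) / μ (closedBall x r)) (𝓝[>] (0:ℝ))}

/-- The measure-theoretic boundary `∂* E`. -/
def measBoundary [MeasurableSpace X] (μ : Measure X) (E : Set X) : Set X := qBoundary μ E 0

lemma aux_double [MeasurableSpace X] {μ : Measure X} {D : ℝ≥0∞}
    (hdb : IsDoublingMeasure D μ) {z y : X} {r : ℝ} (hr : 0 < r)
    (hzy : dist y z ≤ r) :
    μ (closedBall y (2 * r)) ≤ D ^ 2 * μ (closedBall z r) := by
  have hsub : closedBall y (2 * r) ⊆ closedBall z (2 * (2 * r)) := by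
    apply closedBall_subset_closedBall'
    linarith
  calc μ (closedBall y (2 * r)) ≤ μ (closedBall z (2 * (2 * r))) := measure_mono hsub
    _ ≤ D * μ (closedBall z (2 * r)) := (hdb z (2 * r) (by linarith)).1
    _ ≤ D * (D * μ (closedBall z r)) := mul_le_mul_right (hdb z r hr).1 D
    _ = D ^ 2 * μ (closedBall z r) := by ring

/-- A curve from a half-full ball to a half-empty ball meets a ball of radius at
most `2r` which is `(2⁻¹ D⁻²)`-half-full and half-empty. -/
theorem stmt6 [MeasurableSpace X] (μ : Measure X) (D : ℝ≥0∞) (hD : 1 ≤ D)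
    (hdb : IsDoublingMeasure D μ) (E : Set X) (hE : MeasurableSet E)
    (γ : ℝ → X) (hγ : ContinuousOn γ (Set.Icc 0 1)) (r : ℝ) (hr : 0 < r)
    (h0 : 2⁻¹ ≤ μ (closedBall (γ 0) r ∩ E) / μ (closedBall (γ 0) r))
    (h1 : μ (closedBall (γ 1) r ∩ E) / μ (closedBall (γ 1) r) ≤ 2⁻¹) :
    ∃ t ∈ Set.Icc (0:ℝ) 1, ∃ y s, 0 < s ∧ s ≤ 2 * r ∧ γ t ∈ closedBall y s ∧
      2⁻¹ * D ^ (-2 : ℤ) ≤ theta μ E y s := by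
  have hD0 : D ≠ 0 := by intro h; simp [h] at hD
  -- trivial case D = ⊤
  rcases eq_or_ne D ⊤ with hDT | hDT
  · refine ⟨0, by norm_num, γ 0, 2 * r, by linarith, le_refl _, ?_, ?_⟩
    · exact mem_closedBall_self (by linarith)
    · have hz : (⊤ : ℝ≥0∞) ^ (-2 : ℤ) = 0 := by
        rw [show (-2 : ℤ) = Int.negSucc 1 from rfl, zpow_negSucc]
        simp
      simp [hDT, hz]
  -- the set of half-full times
  set f : ℝ → ℝ≥0∞ := fun s => μ (closedBall (γ s) r ∩ E) / μ (closedBall (γ s) r) with hf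
  set T : Set ℝ := {s | s ∈ Set.Icc (0:ℝ) 1 ∧ 2⁻¹ ≤ f s} with hT
  have h0T : (0:ℝ) ∈ T := ⟨by norm_num, h0⟩
  have hTne : T.Nonempty := ⟨0, h0T⟩
  have hTbdd : BddAbove T := ⟨1, fun s hs => hs.1.2⟩
  set t := sSup T with ht
  have htmem : t ∈ Set.Icc (0:ℝ) 1 :=
    ⟨le_csSup hTbdd h0T, csSup_le hTne fun s hs => hs.1.2⟩
  -- continuity at t
  have hcont : ContinuousWithinAt γ (Set.Icc 0 1) t := hγ t htmem
  obtain ⟨δ, hδ, hδc⟩ := Metric.continuousWithinAt_iff.1 hcont r hr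
  -- find s₁ ∈ T with dist (γ s₁) (γ t) < r
  obtain ⟨s₁, hs₁T, hs₁lt⟩ : ∃ s₁ ∈ T, t - δ < s₁ :=
    exists_lt_of_lt_csSup hTne (by linarith)
  have hs₁le : s₁ ≤ t := le_csSup hTbdd hs₁T
  have hd₁ : dist (γ t) (γ s₁) ≤ r := by
    have : dist s₁ t < δ := by
      rw [Real.dist_eq, abs_lt]; constructor <;> linarith
    have := hδc hs₁T.1 this
    rw [dist_comm]; exact this.le
  -- find s₂ with f s₂ ≤ 2⁻¹ and dist (γ t) (γ s₂) ≤ r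
  obtain ⟨s₂, hs₂mem, hs₂f, hd₂⟩ :
      ∃ s₂, s₂ ∈ Set.Icc (0:ℝ) 1 ∧ f s₂ ≤ 2⁻¹ ∧ dist (γ t) (γ s₂) ≤ r := by
    rcases le_or_gt (f t) 2⁻¹ with h | h
    · exact ⟨t, htmem, h, by simp [hr.le]⟩
    · -- f t > 2⁻¹, so t ∈ T, hence t < 1 (since f 1 ≤ 2⁻¹)
      have htT : t ∈ T := ⟨htmem, h.le⟩
      have ht1 : t < 1 := by
        rcases lt_or_eq_of_le htmem.2 with h' | h'
        · exact h'
        · exact absurd (h'.symm ▸ h1 : f t ≤ 2⁻¹) (not_le.2 h)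
      set s₂ := min 1 (t + δ / 2) with hs₂
      have hs₂t : t < s₂ := lt_min ht1 (by linarith)
      have hs₂1 : s₂ ≤ 1 := min_le_left _ _
      have hs₂mem : s₂ ∈ Set.Icc (0:ℝ) 1 := ⟨le_trans htmem.1 hs₂t.le, hs₂1⟩
      have hs₂notT : s₂ ∉ T := fun hmem => absurd (le_csSup hTbdd hmem) (not_le.2 hs₂t)
      have hfs₂ : f s₂ ≤ 2⁻¹ := by
        by_contra hc
        exact hs₂notT ⟨hs₂mem, (not_le.1 hc).le⟩
      have hdist : dist s₂ t < δ := by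
        have : s₂ ≤ t + δ / 2 := min_le_right _ _
        rw [Real.dist_eq, abs_lt]; constructor <;> linarith
      exact ⟨s₂, hs₂mem, hfs₂, by rw [dist_comm]; exact (hδc hs₂mem hdist).le⟩
  -- the ball B = closedBall (γ t) (2r)
  refine ⟨t, htmem, γ t, 2 * r, by linarith, le_refl _,
    mem_closedBall_self (by linarith), ?_⟩
  have hDpow : D ^ (-2 : ℤ) = (D ^ 2)⁻¹ := by
    rw [ENNReal.zpow_neg, show ((2:ℤ)) = ((2:ℕ):ℤ) from rfl, zpow_natCast]
  set B := closedBall (γ t) (2 * r) with hB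
  have hBpos : 0 < μ B := by
    have := (hdb (γ t) (2 * r) (by linarith)).2.1
    exact this
  have hBfin : μ B < ⊤ := (hdb (γ t) (2 * r) (by linarith)).2.2
  -- half-full estimates
  have hkey : ∀ z : X, dist (γ t) z ≤ r →
      D ^ (-2 : ℤ) * μ B ≤ μ (closedBall z r) := by
    intro z hz
    have h2 := aux_double hdb hr hz
    have hD2T : D ^ 2 ≠ ⊤ := by
      simp [pow_eq_top_iff, hDT]
    have hD20 : D ^ 2 ≠ 0 := by
      simp [hD0]
    calc D ^ (-2 : ℤ) * μ B ≤ D ^ (-2 : ℤ) * (D ^ 2 * μ (closedBall z r)) :=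
          mul_le_mul_right h2 _
      _ = (D ^ 2)⁻¹ * D ^ 2 * μ (closedBall z r) := by rw [hDpow, mul_assoc]
      _ = μ (closedBall z r) := by
          rw [ENNReal.inv_mul_cancel hD20 hD2T, one_mul]
  -- μ(E ∩ B) ≥ half
  have hball₁pos : 0 < μ (closedBall (γ s₁) r) := (hdb (γ s₁) r hr).2.1
  have hball₁fin : μ (closedBall (γ s₁) r) < ⊤ := (hdb (γ s₁) r hr).2.2
  have hfull : 2⁻¹ * μ (closedBall (γ s₁) r) ≤ μ (closedBall (γ s₁) r ∩ E) := by
    have := hs₁T.2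
    rwa [ENNReal.le_div_iff_mul_le (Or.inl hball₁pos.ne') (Or.inl hball₁fin.ne)] at this
  have hinterB : 2⁻¹ * D ^ (-2 : ℤ) * μ B ≤ μ (E ∩ B) := by
    calc 2⁻¹ * D ^ (-2 : ℤ) * μ B = 2⁻¹ * (D ^ (-2 : ℤ) * μ B) := by ring
      _ ≤ 2⁻¹ * μ (closedBall (γ s₁) r) := mul_le_mul_right (hkey _ hd₁) _
      _ ≤ μ (closedBall (γ s₁) r ∩ E) := hfull
      _ ≤ μ (E ∩ B) := by
          apply measure_mono
          rw [Set.inter_comm]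
          apply Set.inter_subset_inter_right
          apply closedBall_subset_closedBall'
          rw [dist_comm]
          linarith
  -- μ(B \ E) ≥ half
  have hball₂pos : 0 < μ (closedBall (γ s₂) r) := (hdb (γ s₂) r hr).2.1
  have hball₂fin : μ (closedBall (γ s₂) r) < ⊤ := (hdb (γ s₂) r hr).2.2
  have hempty : 2⁻¹ * μ (closedBall (γ s₂) r) ≤ μ (closedBall (γ s₂) r \ E) := by
    have hle : μ (closedBall (γ s₂) r ∩ E) ≤ 2⁻¹ * μ (closedBall (γ s₂) r) := by
      have := hs₂f
      rwa [ENNReal.div_le_iff_le_mul (Or.inl hball₂pos.ne') (Or.inl hball₂fin.ne)] at this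
    have hsplit : μ (closedBall (γ s₂) r ∩ E) + μ (closedBall (γ s₂) r \ E) =
        μ (closedBall (γ s₂) r) := measure_inter_add_diff _ hE
    have htwo : 2⁻¹ * μ (closedBall (γ s₂) r) + 2⁻¹ * μ (closedBall (γ s₂) r) =
        μ (closedBall (γ s₂) r) := by
      rw [← two_mul, ← mul_assoc, ENNReal.mul_inv_cancel (by norm_num) (by norm_num), one_mul]
    have hfin : μ (closedBall (γ s₂) r ∩ E) ≠ ⊤ :=
      (lt_of_le_of_lt (measure_mono Set.inter_subset_left) hball₂fin).ne
    -- from hsplit and hle: 2⁻¹ μ ≤ μ(\E)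
    by_contra hc
    push_neg at hc
    have : μ (closedBall (γ s₂) r) < μ (closedBall (γ s₂) r) := by
      calc μ (closedBall (γ s₂) r)
          = μ (closedBall (γ s₂) r ∩ E) + μ (closedBall (γ s₂) r \ E) := hsplit.symm
        _ < 2⁻¹ * μ (closedBall (γ s₂) r) + 2⁻¹ * μ (closedBall (γ s₂) r) := by
            apply ENNReal.add_lt_add_of_le_of_lt hfin hle hc
        _ = μ (closedBall (γ s₂) r) := htwo
    exact lt_irrefl _ this
  have hdiffB : 2⁻¹ * D ^ (-2 : ℤ) * μ B ≤ μ (B \ E) := by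
    calc 2⁻¹ * D ^ (-2 : ℤ) * μ B = 2⁻¹ * (D ^ (-2 : ℤ) * μ B) := by ring
      _ ≤ 2⁻¹ * μ (closedBall (γ s₂) r) := mul_le_mul_right (hkey _ hd₂) _
      _ ≤ μ (closedBall (γ s₂) r \ E) := hempty
      _ ≤ μ (B \ E) := by
          apply measure_mono
          apply Set.diff_subset_diff_left
          apply closedBall_subset_closedBall'
          rw [dist_comm]
          linarith
  -- conclude
  rw [theta, ENNReal.le_div_iff_mul_le (Or.inl hBpos.ne') (Or.inl hBfin.ne)]
  exact le_min hinterB hdiffB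
end
end

section
/- Let ξ be a D-doubling gauge function and B a collection of balls contained in a fixed ball B₀ such that every pairwise disjoint subcollection B' ⊆ B satisfies ∑_{B∈B'} ξ(B) < ∞. Then for all ε, Δ ∈ (0,1) and C ≥ 1 there exist a finite pairwise disjoint collection B_ε ⊆ B and s > 0 such that H^ξ_{rad(B)}( ⋃_{B ∈ B, rad(B) ≤ s} CB \ ⋃_{B ∈ B_ε} (1+Δ)B ) < ε. -/
open Metric Set MeasureTheory Filter ENNReal Topology

noncomputable section

variable {X : Type*} [MetricSpace X]

open scoped Classical in
private lemma content_le_of_cover (ξ : X → ℝ → ℝ) (S : ℝ) (A : Set X) (c : ℕ → X) (ρ : ℕ → ℝ)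
    (h1 : ∀ n, ρ n ≤ S) (h2 : A ⊆ ⋃ n, ball (c n) (ρ n)) :
    content ξ S A ≤ ∑' n, if 0 < ρ n then ENNReal.ofReal (ξ (c n) (ρ n)) else 0 := by
  rw [content]
  exact iInf_le_of_le c (iInf_le_of_le ρ (iInf_le_of_le h1 (iInf_le _ h2)))

private lemma content_lt_of_empty (ξ : X → ℝ → ℝ) {S : ℝ} (hS : 0 ≤ S) (x₀ : X) {A : Set X}
    (hA : A = ∅) {ε : ℝ} (hε : 0 < ε) : content ξ S A < ENNReal.ofReal ε := by
  have h := content_le_of_cover ξ S A (fun _ => x₀) (fun _ => 0) (fun _ => hS)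
    (by simp [hA])
  simp only [lt_irrefl, if_false, tsum_zero] at h
  exact lt_of_le_of_lt h (ENNReal.ofReal_pos.2 hε)

private lemma gauge_pow_le {D : ℝ} {ξ : X → ℝ → ℝ} (hD : 1 ≤ D) (hg : IsGauge ξ)
    (hdb : IsDoublingGauge D ξ) (k : ℕ) (x : X) (r : ℝ) (hr : 0 < r) :
    ξ x (2 ^ k * r) ≤ D ^ k * ξ x r := by
  induction k with
  | zero => simp
  | succ k ih =>
    have hr' : 0 < 2 ^ k * r := by positivity
    have h := (hdb x (2 ^ k * r) x (2 * (2 ^ k * r)) hr'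
      (ball_subset_ball (by linarith)) (by linarith) le_rfl).2
    have he : (2 : ℝ) ^ (k + 1) * r = 2 * (2 ^ k * r) := by ring
    rw [he]
    calc ξ x (2 * (2 ^ k * r)) ≤ D * ξ x (2 ^ k * r) := h
      _ ≤ D * (D ^ k * ξ x r) := mul_le_mul_of_nonneg_left ih (by linarith)
      _ = D ^ (k + 1) * ξ x r := by ring

private lemma gauge_le_pow_of_le {D : ℝ} {ξ : X → ℝ → ℝ} (hD : 1 ≤ D) (hg : IsGauge ξ)
    (hdb : IsDoublingGauge D ξ) {b : ℝ} :
    ∀ (k : ℕ) (x : X) (w : ℝ), 0 < w → w ≤ b → b ≤ 2 ^ k * w → ξ x b ≤ D ^ (k + 1) * ξ x w := by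
  intro k
  induction k with
  | zero =>
    intro x w hw hwb hbw
    simp only [pow_zero, one_mul] at hbw
    have h := (hdb x w x b hw (ball_subset_ball hwb) hwb (by linarith)).2
    calc ξ x b ≤ D * ξ x w := h
      _ ≤ D ^ 1 * ξ x w := by rw [pow_one]
  | succ k ih =>
    intro x w hw hwb hbw
    by_cases h2w : 2 * w ≤ b
    · have h1 : ξ x b ≤ D ^ (k + 1) * ξ x (2 * w) := by
        refine ih x (2 * w) (by linarith) h2w ?_
        calc b ≤ 2 ^ (k + 1) * w := hbw
          _ = 2 ^ k * (2 * w) := by ring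
      have h2 : ξ x (2 * w) ≤ D * ξ x w :=
        (hdb x w x (2 * w) hw (ball_subset_ball (by linarith)) (by linarith) le_rfl).2
      have hDk : (0 : ℝ) ≤ D ^ (k + 1) := by positivity
      calc ξ x b ≤ D ^ (k + 1) * ξ x (2 * w) := h1
        _ ≤ D ^ (k + 1) * (D * ξ x w) := mul_le_mul_of_nonneg_left h2 hDk
        _ = D ^ (k + 1 + 1) * ξ x w := by ring
    · push_neg at h2w
      have h := (hdb x w x b hw (ball_subset_ball hwb) hwb h2w.le).2
      have hDD : D ≤ D ^ (k + 1 + 1) := le_self_pow₀ hD (by omega)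
      calc ξ x b ≤ D * ξ x w := h
        _ ≤ D ^ (k + 1 + 1) * ξ x w :=
          mul_le_mul_of_nonneg_right hDD (le_of_lt (hg x w hw))

/-- Discarding a small-content tail: existence of a finite disjoint subcollection
capturing the union of small inflated balls up to `ε` in content. -/
theorem stmt9 (D : ℝ) (hD : 1 ≤ D) (ξ : X → ℝ → ℝ) (hg : IsGauge ξ)
    (hdb : IsDoublingGauge D ξ) (x₀ : X) (r₀ : ℝ) (hr₀ : 0 < r₀)
    (B : Set (X × ℝ)) (hpos : ∀ p ∈ B, 0 < p.2)
    (hsub : ∀ p ∈ B, closedBall p.1 p.2 ⊆ closedBall x₀ r₀)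
    (hsum : ∀ B' ⊆ B, PairwiseDisjointCB B' →
      ∑' p : B', ENNReal.ofReal (ξ (p : X × ℝ).1 (p : X × ℝ).2) ≠ ⊤)
    (ε Δ : ℝ) (hε : ε ∈ Set.Ioo (0:ℝ) 1) (hΔ : Δ ∈ Set.Ioo (0:ℝ) 1)
    (C : ℝ) (hC : 1 ≤ C) :
    ∃ Bε ⊆ B, Bε.Finite ∧ PairwiseDisjointCB Bε ∧ ∃ s : ℝ, 0 < s ∧
      content ξ (sSup (Prod.snd '' B))
        ((⋃ p ∈ {p ∈ B | p.2 ≤ s}, closedBall p.1 (C * p.2)) \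
          ⋃ p ∈ Bε, closedBall p.1 ((1 + Δ) * p.2)) < ENNReal.ofReal ε := by
  classical
  obtain ⟨hε0, hε1⟩ := hε
  obtain ⟨hΔ0, hΔ1⟩ := hΔ
  have hD0 : (0:ℝ) < D := lt_of_lt_of_le one_pos hD
  -- auxiliary: centers are in the big ball
  have hcen : ∀ p ∈ B, dist p.1 x₀ ≤ r₀ := fun p hp =>
    mem_closedBall.1 (hsub p hp (mem_closedBall_self (hpos p hp).le))
  by_cases hbdd : BddAbove (Prod.snd '' B)
  swap
  · -- unbounded radii: a single huge ball swallows everything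
    have hS0 : sSup (Prod.snd '' B) = 0 := Real.sSup_of_not_bddAbove hbdd
    have hex : ∃ q ∈ B, C + 2 * r₀ < q.2 := by
      by_contra h
      push_neg at h
      exact hbdd ⟨C + 2 * r₀, by rintro y ⟨p, hp, rfl⟩; exact h p hp⟩
    obtain ⟨q, hqB, hq⟩ := hex
    refine ⟨{q}, by simpa using hqB, Set.finite_singleton q, ?_, 1, one_pos, ?_⟩
    · intro p hp p' hp' hne
      simp only [mem_singleton_iff] at hp hp'
      exact absurd (hp.trans hp'.symm) hne
    · refine content_lt_of_empty ξ (le_of_eq hS0.symm) x₀ ?_ hε0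
      rw [Set.diff_eq_empty]
      intro x hx
      obtain ⟨p, hp, hxp⟩ := mem_iUnion₂.mp hx
      obtain ⟨hpB, hps⟩ := hp
      refine mem_iUnion₂.mpr ⟨q, mem_singleton q, mem_closedBall.2 ?_⟩
      have h1 : dist x p.1 ≤ C * p.2 := mem_closedBall.1 hxp
      have h2 : C * p.2 ≤ C := by nlinarith
      have h3 : dist x q.1 ≤ dist x p.1 + dist p.1 x₀ + dist x₀ q.1 := dist_triangle4 _ _ _ _
      have h4 : dist x₀ q.1 ≤ r₀ := by rw [dist_comm]; exact hcen q hqB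
      have hq2 : 0 < q.2 := hpos q hqB
      nlinarith [hcen p hpB]
  by_cases hBne : B.Nonempty
  swap
  · -- B empty
    rw [Set.not_nonempty_iff_eq_empty] at hBne
    subst hBne
    refine ⟨∅, Set.empty_subset _, Set.finite_empty,
      fun p hp => absurd hp (Set.notMem_empty p), 1, one_pos, ?_⟩
    refine content_lt_of_empty ξ (by simp [Real.sSup_empty]) x₀ ?_ hε0
    simp
  -- main case
  obtain ⟨p₀, hp₀⟩ := hBne
  set S := sSup (Prod.snd '' B) with hSdef
  have hSmem : ∀ p ∈ B, p.2 ≤ S := fun p hp => le_csSup hbdd ⟨p, hp, rfl⟩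
  have hS : 0 < S := lt_of_lt_of_le (hpos p₀ hp₀) (hSmem p₀ hp₀)
  obtain ⟨K, hK⟩ := pow_unbounded_of_one_lt (R := ℝ) (4 + 2 * C) one_lt_two
  set δ := S / 2 ^ K with hδdef
  have hδ : 0 < δ := div_pos hS (by positivity)
  have hδS : 2 ^ K * δ = S := by rw [hδdef]; field_simp
  -- Vitali covering
  obtain ⟨u, huB, hud, hVit⟩ := Vitali.exists_disjoint_subfamily_covering_enlargement
    (fun p : X × ℝ => closedBall p.1 p.2) B Prod.snd 2 one_lt_two
    (fun p hp => (hpos p hp).le) S hSmem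
    (fun p hp => ⟨p.1, mem_closedBall_self (hpos p hp).le⟩)
  have hudCB : PairwiseDisjointCB u := fun p hp q hq hne => hud hp hq hne
  have hsum_u : ∑' p : u, ENNReal.ofReal (ξ (p : X × ℝ).1 (p : X × ℝ).2) ≠ ⊤ :=
    hsum u huB hudCB
  -- u is countable
  have hcnt : u.Countable := by
    have h1 := Summable.countable_support_ennreal hsum_u
    have h2 : Function.support
        (fun p : u => ENNReal.ofReal (ξ (p : X × ℝ).1 (p : X × ℝ).2)) = Set.univ := by
      ext x
      simp only [Function.mem_support, Set.mem_univ, iff_true]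
      exact (ENNReal.ofReal_pos.2 (hg _ _ (hpos _ (huB x.2)))).ne'
    rw [h2] at h1
    have : Countable u := Set.countable_univ_iff.mp h1
    exact Set.countable_coe_iff.mpr this
  -- the "big" balls (radius > δ) are finite in number
  obtain ⟨m, hm⟩ := pow_unbounded_of_one_lt (R := ℝ) ((2 * S + 2 * r₀) / δ) one_lt_two
  have hbδ : 2 * S + 2 * r₀ ≤ 2 ^ m * δ := le_of_lt ((div_lt_iff₀ hδ).1 hm)
  have hb0 : (0:ℝ) < 2 * S + 2 * r₀ := by linarith
  set c₀ := (D ^ (m + 2))⁻¹ * ξ x₀ (2 * S + r₀) with hc₀def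
  have hc₀ : 0 < c₀ := by
    have := hg x₀ (2 * S + r₀) (by linarith)
    positivity
  have hbig_lb : ∀ q ∈ u, δ < q.2 →
      ENNReal.ofReal c₀ ≤ ENNReal.ofReal (ξ q.1 q.2) := by
    intro q hqu hq2δ
    have hqB := huB hqu
    have hq2 : 0 < q.2 := hpos q hqB
    have step1 : ξ q.1 (2 * S + 2 * r₀) ≤ D ^ (m + 1) * ξ q.1 q.2 := by
      refine gauge_le_pow_of_le hD hg hdb m q.1 q.2 hq2 (by linarith [hSmem q hqB]) ?_
      calc 2 * S + 2 * r₀ ≤ 2 ^ m * δ := hbδ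
        _ ≤ 2 ^ m * q.2 := by
            have : (0:ℝ) ≤ 2 ^ m := by positivity
            nlinarith
    have step2 : D⁻¹ * ξ x₀ (2 * S + r₀) ≤ ξ q.1 (2 * S + 2 * r₀) := by
      refine (hdb x₀ (2 * S + r₀) q.1 (2 * S + 2 * r₀) (by linarith) ?_ (by linarith)
        (by linarith)).1
      intro y hy
      rw [mem_ball] at hy ⊢
      have h4 : dist x₀ q.1 ≤ r₀ := by rw [dist_comm]; exact hcen q hqB
      calc dist y q.1 ≤ dist y x₀ + dist x₀ q.1 := dist_triangle _ _ _
        _ < (2 * S + r₀) + r₀ := by linarith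
        _ = 2 * S + 2 * r₀ := by ring
    refine ENNReal.ofReal_le_ofReal ?_
    have hDm2 : (0:ℝ) < D ^ (m + 2) := by positivity
    rw [hc₀def, inv_mul_le_iff₀ hDm2]
    have hDinv : ξ x₀ (2 * S + r₀) ≤ D * ξ q.1 (2 * S + 2 * r₀) := by
      have h := mul_le_mul_of_nonneg_left step2 hD0.le
      rwa [← mul_assoc, mul_inv_cancel₀ hD0.ne', one_mul] at h
    calc ξ x₀ (2 * S + r₀) ≤ D * ξ q.1 (2 * S + 2 * r₀) := hDinv
      _ ≤ D * (D ^ (m + 1) * ξ q.1 q.2) := mul_le_mul_of_nonneg_left step1 hD0.le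
      _ = D ^ (m + 2) * ξ q.1 q.2 := by ring
  set big := {q ∈ u | δ < q.2} with hbigdef
  have hbigfin : big.Finite := by
    rw [← Set.not_infinite]
    intro hinf
    haveI := hinf.to_subtype
    have htop : (∑' q : big, ENNReal.ofReal (ξ (q : X × ℝ).1 (q : X × ℝ).2)) = ⊤ := by
      refine top_unique ?_
      calc (⊤ : ℝ≥0∞) = ∑' _ : big, ENNReal.ofReal c₀ :=
            (ENNReal.tsum_const_eq_top_of_ne_zero (ENNReal.ofReal_pos.2 hc₀).ne').symm
        _ ≤ _ := ENNReal.tsum_le_tsum (fun q => hbig_lb q q.2.1 q.2.2)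
    refine hsum_u (top_unique ?_)
    calc (⊤ : ℝ≥0∞) = ∑' q : big, ENNReal.ofReal (ξ (q : X × ℝ).1 (q : X × ℝ).2) := htop.symm
      _ ≤ _ := ENNReal.tsum_mono_subtype (fun p : X × ℝ => ENNReal.ofReal (ξ p.1 p.2))
          (show big ⊆ u from fun q hq => hq.1)
  -- choose a finite part capturing all but η of the mass
  set η := ENNReal.ofReal (ε / D ^ K) with hηdef
  have hη : 0 < η := by
    rw [hηdef]
    exact ENNReal.ofReal_pos.2 (by positivity)
  have htend := ENNReal.tendsto_tsum_compl_atTop_zero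
    (f := fun p : u => ENNReal.ofReal (ξ (p : X × ℝ).1 (p : X × ℝ).2)) hsum_u
  obtain ⟨sF, hsF⟩ := (htend.eventually_lt_const hη).exists
  set F : Set (X × ℝ) := (fun x : u => (x : X × ℝ)) '' (↑sF : Set u) with hFdef
  have hFu : F ⊆ u := by rintro _ ⟨x, _, rfl⟩; exact x.2
  have hFfin : F.Finite := (sF.finite_toSet.image _)
  set Bε := F ∪ big with hBεdef
  have hBεu : Bε ⊆ u := Set.union_subset hFu (Set.sep_subset _ _)
  have hBεB : Bε ⊆ B := hBεu.trans huB
  have hBεfin : Bε.Finite := hFfin.union hbigfin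
  have hBεdisj : PairwiseDisjointCB Bε :=
    fun p hp q hq hne => hudCB p (hBεu hp) q (hBεu hq) hne
  set t := u \ Bε with htdef
  have htδ : ∀ q ∈ t, q.2 ≤ δ :=
    fun q hq => le_of_not_gt (fun h => hq.2 (Or.inr ⟨hq.1, h⟩))
  have httsum : (∑' q : t, ENNReal.ofReal (ξ (q : X × ℝ).1 (q : X × ℝ).2)) < η := by
    refine lt_of_le_of_lt ?_ hsF
    have hinj2 : Function.Injective (fun x : t => (⟨⟨(x : X × ℝ), x.2.1⟩,
        fun hmem => x.2.2 (Or.inl ⟨⟨(x : X × ℝ), x.2.1⟩, hmem, rfl⟩)⟩ : {y : u // y ∉ sF})) := by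
      intro a b h
      have h1 : (⟨(a : X × ℝ), a.2.1⟩ : u) = (⟨(b : X × ℝ), b.2.1⟩ : u) :=
        Subtype.ext_iff.mp h
      have h2 : (a : X × ℝ) = (b : X × ℝ) :=
        congrArg (fun z : u => (z : X × ℝ)) h1
      exact Subtype.ext h2
    exact ENNReal.tsum_comp_le_tsum_of_injective hinj2
      (fun y => ENNReal.ofReal (ξ ((y : u) : X × ℝ).1 ((y : u) : X × ℝ).2))
  -- choose the scale s
  have hsRex : ∃ sR : ℝ, 0 < sR ∧ ∀ q ∈ Bε, sR ≤ Δ * q.2 / (1 + C) := by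
    set T := insert (1:ℝ) (hBεfin.toFinset.image (fun q : X × ℝ => Δ * q.2 / (1 + C)))
      with hT
    have hTne : T.Nonempty := Finset.insert_nonempty _ _
    refine ⟨T.min' hTne, ?_, ?_⟩
    · have hmem := T.min'_mem hTne
      rcases Finset.mem_insert.1 hmem with h | h
      · rw [h]; exact one_pos
      · obtain ⟨q, hq, hq'⟩ := Finset.mem_image.1 h
        have hqB : q ∈ B := hBεB (hBεfin.mem_toFinset.1 hq)
        have := hpos q hqB
        rw [← hq']
        positivity
    · intro q hq
      refine Finset.min'_le _ _ ?_
      exact Finset.mem_insert_of_mem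
        (Finset.mem_image_of_mem _ (hBεfin.mem_toFinset.2 hq))
  obtain ⟨sR, hsR_pos, hsR_le⟩ := hsRex
  refine ⟨Bε, hBεB, hBεfin, hBεdisj, sR, hsR_pos, ?_⟩
  -- key geometric fact
  have key : ∀ x, x ∈ (⋃ p ∈ {p ∈ B | p.2 ≤ sR}, closedBall p.1 (C * p.2)) \
      (⋃ p ∈ Bε, closedBall p.1 ((1 + Δ) * p.2)) →
      ∃ q ∈ t, dist x q.1 < 2 ^ K * q.2 := by
    rintro x ⟨hxU, hxV⟩
    obtain ⟨p, hp, hxp⟩ := mem_iUnion₂.mp hxU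
    obtain ⟨hpB, hpsR⟩ := hp
    obtain ⟨q, hqu, hinter, hp2q⟩ := hVit p hpB
    have hq2 : 0 < q.2 := hpos q (huB hqu)
    obtain ⟨z, hz1, hz2⟩ := hinter
    have hdistpq : dist p.1 q.1 ≤ p.2 + q.2 := by
      have h1 : dist z p.1 ≤ p.2 := mem_closedBall.1 hz1
      have h2 : dist z q.1 ≤ q.2 := mem_closedBall.1 hz2
      calc dist p.1 q.1 ≤ dist p.1 z + dist z q.1 := dist_triangle _ _ _
        _ ≤ p.2 + q.2 := by rw [dist_comm p.1 z]; exact add_le_add h1 h2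
    have hdxq : dist x q.1 ≤ q.2 + (1 + C) * p.2 := by
      have hxp' : dist x p.1 ≤ C * p.2 := mem_closedBall.1 hxp
      calc dist x q.1 ≤ dist x p.1 + dist p.1 q.1 := dist_triangle _ _ _
        _ ≤ C * p.2 + (p.2 + q.2) := add_le_add hxp' hdistpq
        _ = q.2 + (1 + C) * p.2 := by ring
    by_cases hqBε : q ∈ Bε
    · exfalso
      apply hxV
      refine mem_iUnion₂.mpr ⟨q, hqBε, mem_closedBall.2 ?_⟩
      have h1 : sR ≤ Δ * q.2 / (1 + C) := hsR_le q hqBε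
      have h2 : (1 + C) * p.2 ≤ Δ * q.2 := by
        have h3 : p.2 ≤ Δ * q.2 / (1 + C) := le_trans hpsR h1
        have h4 : (1 + C) * p.2 ≤ (1 + C) * (Δ * q.2 / (1 + C)) :=
          mul_le_mul_of_nonneg_left h3 (by linarith)
        have h5 : (1 + C) * (Δ * q.2 / (1 + C)) = Δ * q.2 := by field_simp
        linarith
      linarith [hdxq]
    · refine ⟨q, ⟨hqu, hqBε⟩, ?_⟩
      have hp2 : 0 < p.2 := hpos p hpB
      calc dist x q.1 ≤ q.2 + (1 + C) * p.2 := hdxq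
        _ ≤ q.2 + (1 + C) * (2 * q.2) := by nlinarith
        _ = (3 + 2 * C) * q.2 := by ring
        _ < (4 + 2 * C) * q.2 := by nlinarith
        _ ≤ 2 ^ K * q.2 := mul_le_mul_of_nonneg_right hK.le hq2.le
  by_cases htne : t.Nonempty
  swap
  · -- empty tail : the uncovered set is empty
    refine content_lt_of_empty ξ hS.le x₀ ?_ hε0
    refine Set.eq_empty_iff_forall_notMem.2 (fun x hx => ?_)
    obtain ⟨q, hq, -⟩ := key x hx
    exact htne ⟨q, hq⟩
  · obtain ⟨e, he⟩ := (hcnt.mono Set.diff_subset).exists_eq_range htne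
    have hmem : ∀ n, e n ∈ t := by
      intro n
      rw [htdef, he]
      exact Set.mem_range_self n
    set first : ℕ → Prop := fun n => ∀ m < n, e m ≠ e n with hfirstdef
    set c : ℕ → X := fun n => (e n).1 with hcdef
    set ρ : ℕ → ℝ := fun n => if first n then 2 ^ K * (e n).2 else 0 with hρdef
    have hρS : ∀ n, ρ n ≤ S := by
      intro n
      simp only [hρdef]
      by_cases h : first n
      · rw [if_pos h]
        calc 2 ^ K * (e n).2 ≤ 2 ^ K * δ :=
              mul_le_mul_of_nonneg_left (htδ _ (hmem n)) (by positivity)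
          _ = S := hδS
      · rw [if_neg h]; exact hS.le
    have hcov : (⋃ p ∈ {p ∈ B | p.2 ≤ sR}, closedBall p.1 (C * p.2)) \
        (⋃ p ∈ Bε, closedBall p.1 ((1 + Δ) * p.2)) ⊆ ⋃ n, ball (c n) (ρ n) := by
      intro x hx
      obtain ⟨q, hqt, hdist⟩ := key x hx
      have hexn : ∃ n, e n = q := by
        rw [htdef, he] at hqt; exact hqt
      set n := Nat.find hexn with hndef
      have hn : e n = q := Nat.find_spec hexn
      have hfirst : first n := by
        intro m hm hem
        exact (Nat.find_min hexn hm) (hem.trans hn)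
      refine mem_iUnion.2 ⟨n, ?_⟩
      rw [mem_ball]
      simp only [hcdef, hρdef, if_pos hfirst, hn]
      exact hdist
    -- bound the total gauge of the cover
    have hψle : (∑' n, if 0 < ρ n then ENNReal.ofReal (ξ (c n) (ρ n)) else 0) ≤
        ENNReal.ofReal (D ^ K) *
          ∑' q : t, ENNReal.ofReal (ξ (q : X × ℝ).1 (q : X × ℝ).2) := by
      set ψ : ℕ → ℝ≥0∞ := fun n =>
        if first n then ENNReal.ofReal (ξ (e n).1 (e n).2) else 0 with hψdef
      have h1 : ∀ n, (if 0 < ρ n then ENNReal.ofReal (ξ (c n) (ρ n)) else 0) ≤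
          ENNReal.ofReal (D ^ K) * ψ n := by
        intro n
        simp only [hψdef]
        by_cases h : first n
        · simp only [if_pos h]
          by_cases h2 : 0 < ρ n
          · rw [if_pos h2]
            have hr : 0 < (e n).2 := hpos _ (huB (hmem n).1)
            have hle := gauge_pow_le hD hg hdb K (e n).1 (e n).2 hr
            have hρn : ρ n = 2 ^ K * (e n).2 := by simp only [hρdef]; exact if_pos h
            calc ENNReal.ofReal (ξ (c n) (ρ n))
                = ENNReal.ofReal (ξ (e n).1 (2 ^ K * (e n).2)) := by
                  simp only [hcdef, hρn]
              _ ≤ ENNReal.ofReal (D ^ K * ξ (e n).1 (e n).2) := ENNReal.ofReal_le_ofReal hle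
              _ = ENNReal.ofReal (D ^ K) * ENNReal.ofReal (ξ (e n).1 (e n).2) :=
                  ENNReal.ofReal_mul (by positivity)
          · rw [if_neg h2]; exact zero_le
        · have hρn : ρ n = 0 := by simp only [hρdef]; exact if_neg h
          simp [hρn]
      have h2 : (∑' n, ψ n) ≤
          ∑' q : t, ENNReal.ofReal (ξ (q : X × ℝ).1 (q : X × ℝ).2) := by
        have hsupp : Function.support ψ ⊆ {n | first n} := by
          intro n hn
          by_contra h
          apply hn
          have h' : ¬ first n := h
          simp only [hψdef]
          exact if_neg h'
        rw [← tsum_subtype_eq_of_support_subset hsupp]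
        have hinj : Function.Injective
            (fun n : {n | first n} => (⟨e n, hmem n⟩ : t)) := by
          intro a b hab
          have heq : e a = e b := Subtype.ext_iff.mp hab
          rcases lt_trichotomy (a : ℕ) (b : ℕ) with h | h | h
          · exact absurd heq (b.2 a h)
          · exact Subtype.ext h
          · exact absurd heq.symm (a.2 b h)
        calc (∑' n : {n | first n}, ψ n)
            = ∑' n : {n | first n},
              (fun q : t => ENNReal.ofReal (ξ (q : X × ℝ).1 (q : X × ℝ).2))
                ⟨e n, hmem n⟩ := by
              refine tsum_congr (fun n => ?_)
              simp only [hψdef]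
              exact if_pos n.2
          _ ≤ _ := ENNReal.tsum_comp_le_tsum_of_injective hinj _
      calc (∑' n, if 0 < ρ n then ENNReal.ofReal (ξ (c n) (ρ n)) else 0)
          ≤ ∑' n, ENNReal.ofReal (D ^ K) * ψ n := ENNReal.tsum_le_tsum h1
        _ = ENNReal.ofReal (D ^ K) * ∑' n, ψ n := ENNReal.tsum_mul_left
        _ ≤ _ := mul_le_mul_right h2 _
    have hfin : ENNReal.ofReal (D ^ K) * η = ENNReal.ofReal ε := by
      rw [hηdef, ← ENNReal.ofReal_mul (by positivity)]
      congr 1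
      field_simp
    calc content ξ S ((⋃ p ∈ {p ∈ B | p.2 ≤ sR}, closedBall p.1 (C * p.2)) \
          ⋃ p ∈ Bε, closedBall p.1 ((1 + Δ) * p.2))
        ≤ ∑' n, if 0 < ρ n then ENNReal.ofReal (ξ (c n) (ρ n)) else 0 :=
          content_le_of_cover ξ S _ c ρ hρS hcov
      _ ≤ ENNReal.ofReal (D ^ K) *
            ∑' q : t, ENNReal.ofReal (ξ (q : X × ℝ).1 (q : X × ℝ).2) := hψle
      _ < ENNReal.ofReal (D ^ K) * η := by
          refine ENNReal.mul_right_strictMono ?_ ENNReal.ofReal_ne_top httsum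
          exact (ENNReal.ofReal_pos.2 (by positivity)).ne'
      _ = ENNReal.ofReal ε := hfin
end
end
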